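/- arXiv:1505.05903 — 2 statements merged into one kernel-verified Lean document; each statement's English description precedes it below -/
import Mathlib

section
/- A subset I of [0,1] satisfies the descending chain condition if and only if the set D(I) satisfies the descending chain condition. -/
def SatisfiesDCC (S : Set ℝ) : Prop :=
  ¬ ∃ f : ℕ → ℝ, (∀ n, f n ∈ S) ∧ ∀ n, f (n + 1) < f n

def Iplus (I : Set ℝ) : Set ℝ :=
  {j : ℝ | j ∈ Set.Icc (0:ℝ) 1 ∧ ∃ L : List ℝ, L ≠ [] ∧ (∀ x ∈ L, x ∈ I) ∧ L.sum = j}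

def DSet (I : Set ℝ) : Set ℝ :=
  {a : ℝ | a ≤ 1 ∧ ∃ m : ℕ, 0 < m ∧ ∃ f ∈ Iplus I, a = ((m : ℝ) - 1 + f) / m}

open Set Pointwise

lemma dcc_iff_isWF (S : Set ℝ) :
    SatisfiesDCC S ↔ S.IsWF := by
  rw [Set.isWF_iff_no_descending_seq, SatisfiesDCC]
  constructor
  · intro h f hf hmem
    exact h ⟨f, hmem, fun n => hf (Nat.lt_succ_self n)⟩
  · rintro h ⟨f, hf, hd⟩
    exact h f (strictAnti_nat_of_succ_lt hd) hf

/-- iterated sumset -/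
def sumsets (A : Set ℝ) : ℕ → Set ℝ
  | 0 => {0}
  | n + 1 => A + sumsets A n

lemma sumsets_isWF {A : Set ℝ} (hA : A.IsWF) : ∀ n, (sumsets A n).IsWF
  | 0 => Set.isWF_singleton
  | n + 1 => hA.add (sumsets_isWF hA n)

lemma zero_mem_sumsets {A : Set ℝ} (h0 : (0:ℝ) ∈ A) : ∀ n, (0:ℝ) ∈ sumsets A n
  | 0 => rfl
  | n + 1 => by
      have := zero_mem_sumsets h0 n
      have : (0:ℝ) + 0 ∈ A + sumsets A n := Set.add_mem_add h0 this
      simpa [sumsets] using this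

lemma sum_nonneg_of_mem {I : Set ℝ} (hI : I ⊆ Set.Icc (0:ℝ) 1) :
    ∀ L : List ℝ, (∀ x ∈ L, x ∈ I) → 0 ≤ L.sum := by
  intro L hL
  apply List.sum_nonneg
  intro x hx
  exact (hI (hL x hx)).1

lemma key_sum_mem {I : Set ℝ} (hI : I ⊆ Set.Icc (0:ℝ) 1) {δ : ℝ} (hδ : 0 < δ)
    (hmin : ∀ x ∈ I, 0 < x → δ ≤ x) :
    ∀ (L : List ℝ) (n : ℕ), (∀ x ∈ L, x ∈ I) → L.sum ≤ n * δ →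
      L.sum ∈ sumsets (I ∪ {0}) n := by
  intro L
  induction L with
  | nil =>
    intro n _ _
    simpa using zero_mem_sumsets (by simp) n
  | cons x t ih =>
    intro n hmem hsum
    have hx : x ∈ I := hmem x List.mem_cons_self
    have hx0 : 0 ≤ x := (hI hx).1
    have ht : ∀ y ∈ t, y ∈ I := fun y hy => hmem y (List.mem_cons_of_mem x hy)
    have htsum : 0 ≤ t.sum := sum_nonneg_of_mem hI t ht
    rw [List.sum_cons] at hsum ⊢
    rcases eq_or_lt_of_le hx0 with h | h
    · -- x = 0
      have := ih n ht (by nlinarith)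
      rw [← h, zero_add]
      have h2 : (0:ℝ) + t.sum ∈ (I ∪ {0}) + sumsets (I ∪ {0}) n → True := fun _ => trivial
      -- need x + t.sum = t.sum ∈ sumsets n. But target is x + t.sum with x = 0.
      simpa using this
    · -- x > 0, so δ ≤ x, and n ≥ 1
      have hδx : δ ≤ x := hmin x hx h
      have hn : n ≠ 0 := by
        rintro rfl
        simp at hsum
        nlinarith
      obtain ⟨m, rfl⟩ := Nat.exists_eq_succ_of_ne_zero hn
      have htm : t.sum ≤ m * δ := by
        push_cast at hsum
        nlinarith
      have := ih m ht htm
      exact Set.add_mem_add (Or.inl hx) this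

lemma exists_min_pos {I : Set ℝ} (hI : I ⊆ Set.Icc (0:ℝ) 1) (hWF : I.IsWF) :
    ∃ δ : ℝ, 0 < δ ∧ ∀ x ∈ I, 0 < x → δ ≤ x := by
  by_cases h : (I ∩ Set.Ioi (0:ℝ)).Nonempty
  · have hWF' : (I ∩ Set.Ioi (0:ℝ)).IsWF := hWF.mono Set.inter_subset_left
    refine ⟨hWF'.min h, (hWF'.min_mem h).2, fun x hx hx0 => ?_⟩
    exact hWF'.min_le h ⟨hx, hx0⟩
  · exact ⟨1, one_pos, fun x hx hx0 => absurd ⟨hx, hx0⟩ (fun hc => h ⟨x, hc⟩)⟩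

lemma iplus_isWF {I : Set ℝ} (hI : I ⊆ Set.Icc (0:ℝ) 1) (hWF : I.IsWF) :
    (Iplus I).IsWF := by
  obtain ⟨δ, hδ, hmin⟩ := exists_min_pos hI hWF
  set K := ⌈δ⁻¹⌉₊ with hK
  have hsub : Iplus I ⊆ sumsets (I ∪ {0}) K := by
    rintro j ⟨⟨hj0, hj1⟩, L, -, hLmem, rfl⟩
    apply key_sum_mem hI hδ hmin L K hLmem
    have h1 : (1:ℝ) ≤ K * δ := by
      have := Nat.le_ceil δ⁻¹
      calc (1:ℝ) = δ⁻¹ * δ := by field_simp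
        _ ≤ K * δ := by nlinarith
    linarith
  exact (sumsets_isWF (hWF.union Set.isWF_singleton) K).mono hsub

theorem stmt_2 (I : Set ℝ) (hI : I ⊆ Set.Icc (0:ℝ) 1) :
    SatisfiesDCC I ↔ SatisfiesDCC (DSet I) := by
  rw [dcc_iff_isWF, dcc_iff_isWF]
  constructor
  · -- hard direction
    intro hWF
    have hplus := iplus_isWF hI hWF
    rw [Set.isWF_iff_no_descending_seq] at hplus ⊢
    intro a ha hmem
    -- drop first term: b n = a (n+1)
    set b : ℕ → ℝ := fun n => a (n + 1) with hb
    have hba : StrictAnti b := fun m n h => ha (by omega)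
    have hbmem : ∀ n, b n ∈ DSet I := fun n => hmem (n + 1)
    have hb0 : b 0 < a 0 := ha (by omega)
    have ha1 : a 0 ≤ 1 := (hmem 0).1
    set ε : ℝ := 1 - b 0 with hε
    have hεpos : 0 < ε := by simp only [hε]; linarith
    -- choose data
    choose hble m hm f hf hrep using hbmem
    -- bound on m
    set M := ⌈ε⁻¹⌉₊ with hM
    have hmbound : ∀ n, m n ≤ M := by
      intro n
      have hfmem := hf n
      have hf0 : 0 ≤ f n := hfmem.1.1
      have hmn : (0:ℝ) < m n := by exact_mod_cast hm n
      have h1 : (m n : ℝ) - 1 + f n = b n * m n := by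
        rw [hrep n]; field_simp
      have h2 : b n ≤ b 0 := hba.antitone (Nat.zero_le n)
      have hε1 : ε * m n ≤ 1 := by nlinarith
      have h3 : (m n : ℝ) ≤ ε⁻¹ := by
        nlinarith [mul_inv_cancel₀ hεpos.ne', inv_nonneg.mpr hεpos.le]
      have h4 : (m n : ℝ) ≤ (M : ℝ) := h3.trans (Nat.le_ceil ε⁻¹)
      exact_mod_cast h4
    -- pigeonhole: some value of m occurs infinitely often
    have : ∃ k, {n | m n = k}.Infinite := by
      have : Finite (Fin (M + 1)) := inferInstance
      obtain ⟨y, hy⟩ := Finite.exists_infinite_fiber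
        (fun n => (⟨m n, Nat.lt_succ_of_le (hmbound n)⟩ : Fin (M + 1)))
      refine ⟨y.1, ?_⟩
      rw [Set.infinite_coe_iff] at hy
      apply hy.mono
      intro n hn
      simp only [Set.mem_preimage, Set.mem_singleton_iff] at hn
      simpa [Set.mem_setOf_eq] using congrArg Fin.val hn
    obtain ⟨k, hk⟩ := this
    -- extract strictly monotone enumeration
    classical
    have hinf : Infinite {n | m n = k} := hk.to_subtype
    set φ := Nat.orderEmbeddingOfSet {n | m n = k}
    have hφmem : ∀ n, φ n ∈ {n | m n = k} := fun n => by
      rw [← Nat.orderEmbeddingOfSet_range {n | m n = k}]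
      exact ⟨n, rfl⟩
    have hkpos : 0 < k := by
      have := hm (φ 0)
      rwa [hφmem 0] at this
    -- f ∘ φ is strictly decreasing in Iplus I
    apply hplus (fun n => f (φ n)) ?_ (fun n => hf (φ n))
    intro p q hpq
    have hbpq : b (φ q) < b (φ p) := hba (φ.strictMono hpq)
    have hrp := hrep (φ p)
    have hrq := hrep (φ q)
    rw [hφmem p] at hrp
    rw [hφmem q] at hrq
    have hkR : (0:ℝ) < k := by exact_mod_cast hkpos
    rw [hrp, hrq, div_lt_div_iff₀ hkR hkR] at hbpq
    nlinarith
  · -- easy direction: I ⊆ DSet I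
    intro hWF
    apply hWF.mono
    intro x hx
    refine ⟨(hI hx).2, 1, one_pos, x, ⟨hI hx, [x], by simp, by simp [hx], by simp⟩, by simp⟩
end

section
/- If I ⊆ [0,1] satisfies the descending chain condition and D(I) ∩ (0,1] is nonempty, then D(I) ∩ (0,1] has a minimum element; in particular there exists δ > 0 which is the least element of D(I) ∩ (0,1]. -/
open Pointwise

lemma dcc_isWF {S : Set ℝ} (h : SatisfiesDCC S) : S.IsWF := by
  rw [Set.isWF_iff_no_descending_seq]
  intro f hf hmem
  exact h ⟨f, hmem, fun n => hf (Nat.lt_succ_self n)⟩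

lemma isWF_image {S : Set ℝ} (h : S.IsWF) {φ : ℝ → ℝ} (hφ : StrictMono φ) :
    (φ '' S).IsWF := by
  rw [Set.isWF_iff_no_descending_seq] at h ⊢
  intro f hf hmem
  choose g hg hfg using hmem
  refine h g ?_ hg
  intro a b hab
  have : φ (g b) < φ (g a) := by rw [hfg a, hfg b]; exact hf hab
  exact hφ.lt_iff_lt.mp this

lemma sums_isWF {I : Set ℝ} (hI : I.IsWF) (N : ℕ) :
    {x : ℝ | ∃ L : List ℝ, (∀ a ∈ L, a ∈ I) ∧ L.length ≤ N ∧ L.sum = x}.IsWF := by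
  induction N with
  | zero =>
    refine Set.IsWF.mono (Set.isWF_singleton (a := (0:ℝ))) ?_
    rintro x ⟨L, _, hlen, rfl⟩
    have : L = [] := List.length_eq_zero_iff.mp (Nat.le_zero.mp hlen)
    simp [this]
  | succ N ih =>
    refine Set.IsWF.mono (ih.union (hI.add ih)) ?_
    rintro x ⟨L, hL, hlen, rfl⟩
    match L with
    | [] => exact Or.inl ⟨[], by simp⟩
    | a :: L' =>
      right
      rw [Set.mem_add]
      refine ⟨a, hL a (by simp), L'.sum, ⟨L', fun y hy => hL y (by simp [hy]),
        Nat.succ_le_succ_iff.mp hlen, rfl⟩, by simp⟩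

lemma sum_ge_length {ε : ℝ} : ∀ L : List ℝ, (∀ x ∈ L, ε ≤ x) → ε * L.length ≤ L.sum := by
  intro L
  induction L with
  | nil => simp
  | cons a L ih =>
    intro h
    have h1 := h a (by simp)
    have h2 := ih (fun x hx => h x (by simp [hx]))
    simp only [List.length_cons, List.sum_cons, Nat.cast_add, Nat.cast_one]
    nlinarith

lemma list_filter_sum (p : ℝ → Bool) (L : List ℝ) :
    (L.filter p).sum + (L.filter fun x => !p x).sum = L.sum := by
  induction L with
  | nil => simp
  | cons a L ih =>
    by_cases h : p a <;> simp [List.filter_cons, h, ← ih] <;> ring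

lemma Iplus_isWF {I : Set ℝ} (hI : I ⊆ Set.Icc (0:ℝ) 1) (hwf : I.IsWF) :
    (Iplus I).IsWF := by
  by_cases hpos : (I ∩ Set.Ioi (0:ℝ)).Nonempty
  · have hwf' : (I ∩ Set.Ioi (0:ℝ)).IsWF := hwf.mono Set.inter_subset_left
    set ε := hwf'.min hpos with hε
    have hεmem := hwf'.min_mem hpos
    have hε0 : 0 < ε := hεmem.2
    have hεle : ∀ x ∈ I, 0 < x → ε ≤ x := fun x hx h0 => hwf'.min_le hpos ⟨hx, h0⟩
    set N := ⌈1/ε⌉₊ with hN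
    refine Set.IsWF.mono (sums_isWF hwf N) ?_
    rintro f ⟨⟨hf0, hf1⟩, L, -, hLmem, hsum⟩
    set L' := L.filter (fun x => decide (0 < x)) with hL'
    have hmem' : ∀ x ∈ L', x ∈ I ∧ 0 < x := by
      intro x hx
      rw [hL', List.mem_filter] at hx
      exact ⟨hLmem x hx.1, by simpa using hx.2⟩
    have hsum' : L'.sum = f := by
      have := list_filter_sum (fun x => decide (0 < x)) L
      have hz : (L.filter (fun x => !decide (0 < x))).sum = 0 := by
        apply List.sum_eq_zero
        intro x hx
        rw [List.mem_filter] at hx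
        have h1 : ¬ (0 < x) := by simpa using hx.2
        have h2 := (hI (hLmem x hx.1)).1
        linarith
      rw [hz, add_zero] at this
      rw [← hsum]; exact this
    have hlen : ε * L'.length ≤ f := by
      rw [← hsum']
      exact sum_ge_length L' (fun x hx => hεle x (hmem' x hx).1 (hmem' x hx).2)
    have hlenN : L'.length ≤ N := by
      by_contra hcon
      push_neg at hcon
      have h1 : (1:ℝ)/ε ≤ N := Nat.le_ceil _
      have h2 : (N:ℝ) < L'.length := by exact_mod_cast hcon
      have : 1 < ε * L'.length := by
        have := mul_lt_mul_of_pos_left h2 hε0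
        calc (1:ℝ) = ε * (1/ε) := by field_simp
        _ ≤ ε * N := by nlinarith
        _ < ε * L'.length := this
      linarith
    exact ⟨L', fun a ha => (hmem' a ha).1, hlenN, hsum'⟩
  · refine Set.IsWF.mono (Set.isWF_singleton (a := (0:ℝ))) ?_
    rintro f ⟨-, L, -, hLmem, hsum⟩
    have : ∀ x ∈ L, x = 0 := by
      intro x hx
      have h1 := (hI (hLmem x hx)).1
      by_contra h
      exact hpos ⟨x, hLmem x hx, lt_of_le_of_ne h1 (Ne.symm h)⟩
    simp [← hsum, List.sum_eq_zero this]

lemma isWF_biUnion (s : Finset ℕ) (t : ℕ → Set ℝ) (h : ∀ m ∈ s, (t m).IsWF) :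
    (⋃ m ∈ s, t m).IsWF := by
  classical
  induction s using Finset.induction_on with
  | empty => simp
  | @insert a s hni ih =>
    rw [Finset.set_biUnion_insert]
    exact (h a (Finset.mem_insert_self a s)).union
      (ih fun m hm => h m (Finset.mem_insert_of_mem hm))

theorem stmt_5 (I : Set ℝ) (hI : I ⊆ Set.Icc (0:ℝ) 1)
    (hdcc : SatisfiesDCC I)
    (hne : (DSet I ∩ Set.Ioc (0:ℝ) 1).Nonempty) :
    ∃ δ : ℝ, 0 < δ ∧ IsLeast (DSet I ∩ Set.Ioc (0:ℝ) 1) δ := by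
  have hwfP : (Iplus I).IsWF := Iplus_isWF hI (dcc_isWF hdcc)
  by_cases hlt : ∃ a ∈ DSet I ∩ Set.Ioc (0:ℝ) 1, a < 1
  · obtain ⟨c, ⟨hcD, hc0, hc1⟩, hclt⟩ := hlt
    set M := ⌈1/(1-c)⌉₊ with hM
    set U := ⋃ m ∈ Finset.Icc 1 M, (fun f => ((m:ℝ) - 1 + f)/m) '' Iplus I with hU
    have hUwf : U.IsWF := by
      apply isWF_biUnion
      intro m hm
      have hm1 : 1 ≤ m := (Finset.mem_Icc.mp hm).1
      apply isWF_image hwfP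
      intro a b hab
      have hm0 : (0:ℝ) < m := by exact_mod_cast hm1
      exact div_lt_div_of_pos_right (by linarith) hm0
    have hsub : DSet I ∩ Set.Ioc (0:ℝ) c ⊆ U := by
      rintro a ⟨⟨ha1, m, hm0, f, hfP, rfl⟩, ha0, hac⟩
      have hf0 : (0:ℝ) ≤ f := hfP.1.1
      have hmR : (0:ℝ) < m := by exact_mod_cast hm0
      have hmM : m ≤ M := by
        have h1 : ((m:ℝ) - 1 + f)/m ≤ c := hac
        have h2 : (m:ℝ) - 1 + f ≤ c * m := by
          rw [div_le_iff₀ hmR] at h1; linarith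
        have h3 : (m:ℝ) * (1 - c) ≤ 1 := by nlinarith
        have h4 : (m:ℝ) ≤ 1/(1-c) := by
          rw [le_div_iff₀ (by linarith)]; linarith
        have h5 : (1:ℝ)/(1-c) ≤ M := Nat.le_ceil _
        exact_mod_cast h4.trans h5
      refine Set.mem_biUnion (Finset.mem_Icc.mpr ⟨hm0, hmM⟩) ⟨f, hfP, rfl⟩
    have hWwf : (DSet I ∩ Set.Ioc (0:ℝ) c).IsWF := hUwf.mono hsub
    have hWne : (DSet I ∩ Set.Ioc (0:ℝ) c).Nonempty := ⟨c, hcD, hc0, le_refl c⟩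
    set δ := hWwf.min hWne with hδ
    have hδmem := hWwf.min_mem hWne
    have hδ0 : 0 < δ := hδmem.2.1
    have hδc : δ ≤ c := hδmem.2.2
    refine ⟨δ, hδ0, ⟨hδmem.1, hδ0, hδc.trans (le_of_lt hclt)⟩, ?_⟩
    rintro b ⟨hbD, hb0, hb1⟩
    by_cases hbc : b ≤ c
    · exact hWwf.min_le hWne ⟨hbD, hb0, hbc⟩
    · push_neg at hbc
      linarith
  · push_neg at hlt
    obtain ⟨a, ha⟩ := hne
    have ha1 : a = 1 := le_antisymm ha.2.2 (hlt a ha)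
    refine ⟨1, one_pos, ⟨ha1 ▸ ha, ?_⟩⟩
    intro b hb
    exact hlt b hb
end
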